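/- Convolution theorem for the photography transform: for f, g ∈ S(ℝ²ⁿ) and any α ∈ ℝ \ {0}, P_α(f * g) = (P_α f) * (P_α g), where on the left the convolution is taken over ℝ²ⁿ and on the right over ℝⁿ. -/

import Mathlib

open MeasureTheory SchwartzMap FourierTransform Real

noncomputable section

abbrev En (n : ℕ) := EuclideanSpace ℝ (Fin n)
abbrev E2n (n : ℕ) := WithLp 2 (En n × En n)

instance (n : ℕ) : MeasureSpace (E2n n) :=
  ⟨Measure.map (WithLp.toLp 2) (volume : Measure (En n × En n))⟩
instance (n : ℕ) : BorelSpace (E2n n) := WithLp.borelSpace 2 (En n) (En n)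

/-- The photography transform `P`. -/
def photo (n : ℕ) (f : E2n n → ℂ) (α : ℝ) (x : En n) : ℂ :=
  (|α| ^ n)⁻¹ • ∫ u : En n, f (WithLp.toLp 2 (α⁻¹ • x + (1 - α⁻¹) • u, u))

/-!
With `L (x, u) = (α⁻¹ • x + (1 - α⁻¹) • u, u)`, the transform `P_α h` is `|α|⁻ⁿ` times the
integral of `h ∘ L` over the second factor. The map `L` is linear with Jacobian `|α|⁻ⁿ`, so
`(f * g) ∘ L = |α|⁻ⁿ • (f ∘ L) * (g ∘ L)`; and by Fubini, integrating a convolution on `ℝⁿ × ℝⁿ`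
over the second factor gives the convolution on `ℝⁿ` of the integrals over the second factor.
Schwartz decay justifies every exchange of integrals.
-/

open Module

theorem SchwartzMap.integrable_comp_sub_mul {D 𝕜 : Type*} [NormedAddCommGroup D]
    [NormedSpace ℝ D] [MeasurableSpace D] [BorelSpace D] [SecondCountableTopology D] [RCLike 𝕜]
    (μ : Measure D) [μ.HasTemperateGrowth] (f g : 𝓢(D, 𝕜)) (z : D) :
    Integrable (fun w => f (z - w) * g w) μ :=
  g.integrable.bdd_mul (f.continuous.comp (continuous_const.sub continuous_id)).aestronglyMeasurable
    (.of_forall fun w => norm_le_seminorm ℝ f (z - w))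

theorem SchwartzMap.exists_integrable_bound_snd {E E' V : Type*} [NormedAddCommGroup E]
    [NormedSpace ℝ E] [NormedAddCommGroup E'] [NormedSpace ℝ E'] [MeasurableSpace E']
    [NormedAddCommGroup V] [NormedSpace ℝ V] (ν : Measure E') [ν.HasTemperateGrowth]
    (F : 𝓢(E × E', V)) : ∃ k : E' → ℝ, Integrable k ν ∧ ∀ p, ‖F p‖ ≤ k p.2 := by
  obtain ⟨N, hN⟩ := Measure.HasTemperateGrowth.exists_integrable (μ := ν)
  set C := 2 ^ N * ((Finset.Iic (N, 0)).sup fun m => SchwartzMap.seminorm ℝ m.1 m.2) F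
  refine ⟨fun b => C * (1 + ‖b‖) ^ (-(N : ℝ)), hN.const_mul C, fun p => ?_⟩
  have hdecay := one_add_le_sup_seminorm_apply (𝕜 := ℝ) (m := (N, 0)) le_rfl le_rfl F p
  rw [norm_iteratedFDeriv_zero] at hdecay
  show ‖F p‖ ≤ C * (1 + ‖p.2‖) ^ (-(N : ℝ))
  rw [Real.rpow_neg (by positivity), Real.rpow_natCast, ← div_eq_mul_inv,
    le_div_iff₀ (by positivity)]
  calc ‖F p‖ * (1 + ‖p.2‖) ^ N ≤ (1 + ‖p‖) ^ N * ‖F p‖ := by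
        rw [mul_comm]; gcongr; exact norm_snd_le p
    _ ≤ C := hdecay

def scaleShear {E : Type*} [NormedAddCommGroup E] [NormedSpace ℝ E] (a b : ℝ) (ha : a ≠ 0) :
    (E × E) ≃L[ℝ] E × E :=
  .equivOfInverse
    ((a • ContinuousLinearMap.fst ℝ E E + b • ContinuousLinearMap.snd ℝ E E).prod
      (ContinuousLinearMap.snd ℝ E E))
    ((a⁻¹ • (ContinuousLinearMap.fst ℝ E E - b • ContinuousLinearMap.snd ℝ E E)).prod
      (ContinuousLinearMap.snd ℝ E E))
    (fun p => by ext <;> simp [smul_smul, ha])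
    (fun p => by ext <;> simp [smul_smul, ha])

section Haar

variable {E : Type*} [NormedAddCommGroup E] [NormedSpace ℝ E] [MeasurableSpace E]
  [BorelSpace E] [FiniteDimensional ℝ E] (μ : Measure E) [μ.IsAddHaarMeasure]

theorem integral_comp_smul_add {V : Type*} [NormedAddCommGroup V] [NormedSpace ℝ V]
    (h : E → V) (a : ℝ) (c : E) :
    ∫ x, h (a • x + c) ∂μ = (|a| ^ finrank ℝ E)⁻¹ • ∫ x, h x ∂μ := by
  rw [Measure.integral_comp_smul μ (fun x => h (x + c)), integral_add_right_eq_self, abs_inv,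
    abs_pow]

theorem integral_prod_comp_smul_add {V : Type*} [NormedAddCommGroup V] [NormedSpace ℝ V]
    {h : E × E → V} (a b : ℝ) (hh : Integrable h (μ.prod μ))
    (hh' : Integrable (fun p => h (a • p.1 + b • p.2, p.2)) (μ.prod μ)) :
    ∫ p, h (a • p.1 + b • p.2, p.2) ∂(μ.prod μ) =
      (|a| ^ finrank ℝ E)⁻¹ • ∫ p, h p ∂(μ.prod μ) := by
  rw [integral_prod_symm _ hh', integral_prod_symm _ hh, ← integral_smul]
  exact integral_congr_ae
    (.of_forall fun v => integral_comp_smul_add μ (fun x => h (x, v)) a (b • v))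

theorem integral_comp_sub_mul_scaleShear {𝕜 : Type*} [RCLike 𝕜] (f g : 𝓢(E × E, 𝕜)) {a : ℝ}
    (ha : a ≠ 0) (b : ℝ) (z : E × E) :
    ∫ w, f (scaleShear a b ha z - w) * g w ∂(μ.prod μ) =
      |a| ^ finrank ℝ E •
        ∫ w, f (scaleShear a b ha (z - w)) * g (scaleShear a b ha w) ∂(μ.prod μ) := by
  set L := scaleShear (E := E) a b ha
  have hint : Integrable (fun w => f (L z - w) * g w) (μ.prod μ) :=
    integrable_comp_sub_mul _ f g _
  have hint' : Integrable (fun w => f (L z - L w) * g (L w)) (μ.prod μ) := by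
    simpa only [compCLMOfContinuousLinearEquiv_apply, Function.comp_apply, map_sub] using
      integrable_comp_sub_mul (μ.prod μ) (compCLMOfContinuousLinearEquiv 𝕜 L f)
        (compCLMOfContinuousLinearEquiv 𝕜 L g) z
  have hshear : ∫ w, f (L z - L w) * g (L w) ∂(μ.prod μ) =
      (|a| ^ finrank ℝ E)⁻¹ • ∫ w, f (L z - w) * g w ∂(μ.prod μ) :=
    integral_prod_comp_smul_add μ a b hint hint'
  simp only [map_sub]
  rw [hshear, smul_smul, mul_inv_cancel₀ (by positivity), one_smul]

end Haar

section Marginal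

variable {E E' 𝕜 : Type*} [NormedAddCommGroup E] [MeasurableSpace E] [BorelSpace E]
  [NormedAddCommGroup E'] [MeasurableSpace E'] [BorelSpace E'] [SecondCountableTopology E']
  [RCLike 𝕜] {μ : Measure E} {ν : Measure E'} [SFinite μ] [SFinite ν] [ν.IsAddRightInvariant]

theorem integral_integral_convolution_snd {F G : E × E' → 𝕜} (hF : Continuous F) {k : E' → ℝ}
    (hk : Integrable k ν) (hFk : ∀ p, ‖F p‖ ≤ k p.2) (hG : Integrable G (μ.prod ν)) (x : E) :
    ∫ u, ∫ w, F ((x, u) - w) * G w ∂(μ.prod ν) ∂ν =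
      ∫ y, (∫ u, F (x - y, u) ∂ν) * ∫ v, G (y, v) ∂ν ∂μ := by
  set Φ : (E × E') × E' → 𝕜 := fun q => F (x - q.1.1, q.2 - q.1.2) * G q.1
  have hΦm : AEStronglyMeasurable Φ ((μ.prod ν).prod ν) :=
    (hF.comp (by fun_prop)).aestronglyMeasurable.mul hG.1.comp_fst
  have hshift : MeasurePreserving (fun q : (E × E') × E' => (q.1, q.2 + q.1.2))
      ((μ.prod ν).prod ν) ((μ.prod ν).prod ν) :=
    (MeasurePreserving.id _).skew_product (g := fun (p : E × E') u => u + p.2) (by fun_prop)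
      (.of_forall fun p => (measurePreserving_add_right ν p.2).map_eq)
  -- after the shift `u ↦ u + v`, the integrand is dominated by `k u * ‖G (y, v)‖`
  have hΦ : Integrable Φ ((μ.prod ν).prod ν) := by
    refine (hshift.integrable_comp hΦm).1 ((hG.norm.mul_prod hk).mono'
      (hΦm.comp_measurePreserving hshift) (.of_forall fun q => ?_))
    show ‖F (x - q.1.1, q.2 + q.1.2 - q.1.2) * G q.1‖ ≤ ‖G q.1‖ * k q.2
    rw [add_sub_cancel_right, norm_mul, mul_comm]
    exact mul_le_mul_of_nonneg_left (hFk _) (norm_nonneg _)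
  have hinner : ∀ w, ∫ u, Φ (w, u) ∂ν = (∫ u, F (x - w.1, u) ∂ν) * G w := fun w => by
    rw [integral_mul_const (G w) fun u => F (x - w.1, u - w.2),
      integral_sub_right_eq_self (fun u => F (x - w.1, u)) w.2]
  calc ∫ u, ∫ w, F ((x, u) - w) * G w ∂(μ.prod ν) ∂ν
      = ∫ w, ∫ u, Φ (w, u) ∂ν ∂(μ.prod ν) := (integral_integral_swap hΦ).symm
    _ = ∫ w, (∫ u, F (x - w.1, u) ∂ν) * G w ∂(μ.prod ν) := by simp_rw [hinner]
    _ = ∫ y, ∫ v, (∫ u, F (x - y, u) ∂ν) * G (y, v) ∂ν ∂μ :=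
        integral_prod _ (by simpa only [hinner] using hΦ.integral_prod_left)
    _ = ∫ y, (∫ u, F (x - y, u) ∂ν) * ∫ v, G (y, v) ∂ν ∂μ := by
        simp_rw [integral_const_mul]

end Marginal

theorem SchwartzMap.integral_integral_convolution_snd {E E' 𝕜 : Type*} [NormedAddCommGroup E]
    [NormedSpace ℝ E] [MeasurableSpace E] [BorelSpace E] [FiniteDimensional ℝ E]
    [NormedAddCommGroup E'] [NormedSpace ℝ E'] [MeasurableSpace E'] [BorelSpace E']
    [FiniteDimensional ℝ E'] [RCLike 𝕜] (μ : Measure E) (ν : Measure E') [μ.IsAddHaarMeasure]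
    [ν.IsAddHaarMeasure] (F G : 𝓢(E × E', 𝕜)) (x : E) :
    ∫ u, ∫ w, F ((x, u) - w) * G w ∂(μ.prod ν) ∂ν =
      ∫ y, (∫ u, F (x - y, u) ∂ν) * ∫ v, G (y, v) ∂ν ∂μ := by
  obtain ⟨k, hk, hFk⟩ := F.exists_integrable_bound_snd ν
  exact _root_.integral_integral_convolution_snd F.continuous hk hFk G.integrable x

theorem integral_E2n_eq_integral_prod {n : ℕ} {V : Type*} [NormedAddCommGroup V]
    [NormedSpace ℝ V] (h : E2n n → V) :
    ∫ w : E2n n, h w = ∫ p : En n × En n, h (WithLp.toLp 2 p) ∂(volume.prod volume) :=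
  (MeasurableEquiv.toLp 2 (En n × En n)).measurableEmbedding.integral_map _

/-- convolution theorem for the photography transform. -/
theorem photography_convolution (n : ℕ) (f g : 𝓢(E2n n, ℂ)) (α : ℝ) (hα : α ≠ 0)
    (xbar : En n) :
    photo n (fun z => ∫ w : E2n n, f (z - w) * g w) α xbar =
      ∫ y : En n, photo n (⇑f) α (xbar - y) * photo n (⇑g) α y := by
  set L := scaleShear (E := En n) α⁻¹ (1 - α⁻¹) (inv_ne_zero hα)
  set e := (WithLp.prodContinuousLinearEquiv 2 ℝ (En n) (En n)).symm
  set F := compCLMOfContinuousLinearEquiv ℂ (L.trans e) f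
  set G := compCLMOfContinuousLinearEquiv ℂ (L.trans e) g
  have hphoto : ∀ (h : E2n n → ℂ) x, photo n h α x = (|α| ^ n)⁻¹ • ∫ u, h (e (L (x, u))) :=
    fun _ _ => rfl
  have hconv : ∀ z, ∫ w : E2n n, f (e (L z) - w) * g w =
      (|α| ^ n)⁻¹ • ∫ w, F (z - w) * G w ∂(volume.prod volume) := fun z => by
    rw [integral_E2n_eq_integral_prod]
    refine (integral_comp_sub_mul_scaleShear volume (compCLMOfContinuousLinearEquiv ℂ e f)
      (compCLMOfContinuousLinearEquiv ℂ e g) (inv_ne_zero hα) (1 - α⁻¹) z).trans ?_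
    rw [abs_inv, finrank_euclideanSpace_fin, inv_pow]
    rfl
  calc photo n (fun z => ∫ w : E2n n, f (z - w) * g w) α xbar
      = (|α| ^ n)⁻¹ • (|α| ^ n)⁻¹ •
          ∫ u, ∫ w, F ((xbar, u) - w) * G w ∂(volume.prod volume) := by
        rw [hphoto]; simp_rw [hconv]; rw [integral_smul]
    _ = (|α| ^ n)⁻¹ • (|α| ^ n)⁻¹ • ∫ y, (∫ u, F (xbar - y, u)) * ∫ v, G (y, v) := by
        rw [F.integral_integral_convolution_snd volume volume G]
    _ = ∫ y : En n, photo n (⇑f) α (xbar - y) * photo n (⇑g) α y := by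
        simp_rw [hphoto, smul_mul_smul, integral_smul, smul_smul]
        rfl
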